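/- arXiv:1702.06862 — 5 statements merged into one kernel-verified Lean document; each statement's English description precedes it below -/
import Mathlib

section
/- Let p < q be natural numbers, x₁, y₁⁽ᵖ⁾, y₁⁽ᑫ⁾ real numbers, and let g, h_p, h_q : ℝ → ℝ be q-times continuously differentiable. Write D = h_p⁽ᵖ⁾(x₁)·h_q⁽ᑫ⁾(x₁) - h_q⁽ᵖ⁾(x₁)·h_p⁽ᑫ⁾(x₁) and assume D ≠ 0. Then the function y defined by y(x) = g(x) + ((h_q⁽ᑫ⁾(x₁)·h_p(x) - h_q⁽ᵖ⁾(x₁)·h_q(x))/D)·(y₁⁽ᵖ⁾ - g⁽ᵖ⁾(x₁)) + ((h_p⁽ᵖ⁾(x₁)·h_q(x) - h_p⁽ᑫ⁾(x₁)·h_p(x))/D)·(y₁⁽ᑫ⁾ - g⁽ᑫ⁾(x₁)) satisfies y⁽ᵖ⁾(x₁) = y₁⁽ᵖ⁾ and y⁽ᑫ⁾(x₁) = y₁⁽ᑫ⁾, where f⁽ᵏ⁾ denotes the k-th iterated derivative of f. -/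
/-!
The correction added to `g` is `c₁ • h_p + c₂ • h_q`, whose coefficients are the Cramer solution of
the 2 × 2 system asking the `p`-th and `q`-th derivatives at `x₁` to make up the defects
`y₁⁽ᵖ⁾ - g⁽ᵖ⁾(x₁)` and `y₁⁽ᑫ⁾ - g⁽ᑫ⁾(x₁)`; `D` is the determinant of that system. Since taking the
`k`-th derivative at `x₁` is linear on `Cᵏ` functions, both constraints hold.
-/

theorem iteratedDeriv_add_const_mul_add_const_mul {𝕜 : Type*} [NontriviallyNormedField 𝕜]
    {n : ℕ} {f h₁ h₂ : 𝕜 → 𝕜} {x : 𝕜} (hf : ContDiffAt 𝕜 n f x) (hh₁ : ContDiffAt 𝕜 n h₁ x)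
    (hh₂ : ContDiffAt 𝕜 n h₂ x) (a b : 𝕜) :
    iteratedDeriv n (fun y => f y + a * h₁ y + b * h₂ y) x
      = iteratedDeriv n f x + a * iteratedDeriv n h₁ x + b * iteratedDeriv n h₂ x := by
  have ha : ContDiffAt 𝕜 n (a * h₁ ·) x := contDiffAt_const.mul hh₁
  have hb : ContDiffAt 𝕜 n (b * h₂ ·) x := contDiffAt_const.mul hh₂
  change iteratedDeriv n ((fun y => f y + a * h₁ y) + (b * h₂ ·)) x = _
  rw [iteratedDeriv_add (hf.add ha) hb]
  change iteratedDeriv n (f + (a * h₁ ·)) x + _ = _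
  rw [iteratedDeriv_add hf ha, iteratedDeriv_const_mul_field, iteratedDeriv_const_mul_field]

theorem cramer_two_by_two {K : Type*} [Field K] {a b c d D : K} (hD : D = a * d - b * c)
    (hD0 : D ≠ 0) (u v : K) :
    a * ((d * u - b * v) / D) + b * ((a * v - c * u) / D) = u
      ∧ c * ((d * u - b * v) / D) + d * ((a * v - c * u) / D) = v := by
  constructor <;> (field_simp; rw [hD]; ring)

theorem two_derivative_constrained_expression
    (p q : ℕ) (hpq : p < q) (x₁ yp yq : ℝ) (g hp hq : ℝ → ℝ)
    (hg : ContDiff ℝ q g) (hhp : ContDiff ℝ q hp) (hhq : ContDiff ℝ q hq)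
    (D : ℝ)
    (hD : D = iteratedDeriv p hp x₁ * iteratedDeriv q hq x₁
            - iteratedDeriv p hq x₁ * iteratedDeriv q hp x₁)
    (hD0 : D ≠ 0) :
    (iteratedDeriv p
      (fun x => g x
        + (iteratedDeriv q hq x₁ * hp x - iteratedDeriv q hp x₁ * hq x) / D
            * (yp - iteratedDeriv p g x₁)
        + (iteratedDeriv p hp x₁ * hq x - iteratedDeriv p hq x₁ * hp x) / D
            * (yq - iteratedDeriv q g x₁)) x₁ = yp)
    ∧ (iteratedDeriv q
      (fun x => g x
        + (iteratedDeriv q hq x₁ * hp x - iteratedDeriv q hp x₁ * hq x) / D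
            * (yp - iteratedDeriv p g x₁)
        + (iteratedDeriv p hp x₁ * hq x - iteratedDeriv p hq x₁ * hp x) / D
            * (yq - iteratedDeriv q g x₁)) x₁ = yq) := by
  set u := yp - iteratedDeriv p g x₁
  set v := yq - iteratedDeriv q g x₁
  set c₁ := (iteratedDeriv q hq x₁ * u - iteratedDeriv p hq x₁ * v) / D
  set c₂ := (iteratedDeriv p hp x₁ * v - iteratedDeriv q hp x₁ * u) / D
  have hy : ∀ x, g x
        + (iteratedDeriv q hq x₁ * hp x - iteratedDeriv q hp x₁ * hq x) / D * u
        + (iteratedDeriv p hp x₁ * hq x - iteratedDeriv p hq x₁ * hp x) / D * v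
      = g x + c₁ * hp x + c₂ * hq x := fun x => by ring
  have hp_le_q : (p : WithTop ℕ∞) ≤ q := by exact_mod_cast hpq.le
  obtain ⟨hcp, hcq⟩ := cramer_two_by_two hD hD0 u v
  simp only [hy]
  constructor
  · rw [iteratedDeriv_add_const_mul_add_const_mul ((hg.of_le hp_le_q).contDiffAt)
      ((hhp.of_le hp_le_q).contDiffAt) ((hhq.of_le hp_le_q).contDiffAt)]
    linear_combination hcp
  · rw [iteratedDeriv_add_const_mul_add_const_mul hg.contDiffAt hhp.contDiffAt hhq.contDiffAt]
    linear_combination hcq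
end

section
/- Let p < q be natural numbers, x₁, y₁⁽ᵖ⁾, y₁⁽ᑫ⁾ real numbers, and let g : ℝ → ℝ be q-times continuously differentiable. Then the function y defined by y(x) = g(x) + (xᵖ/p!)·(y₁⁽ᵖ⁾ - g⁽ᵖ⁾(x₁)) + (x^{q-p}/q! - x₁^{q-p}/(p!(q-p)!))·xᵖ·(y₁⁽ᑫ⁾ - g⁽ᑫ⁾(x₁)) satisfies y⁽ᵖ⁾(x₁) = y₁⁽ᵖ⁾ and y⁽ᑫ⁾(x₁) = y₁⁽ᑫ⁾, where f⁽ᵏ⁾ denotes the k-th iterated derivative of f. -/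
/-!
Write the expression as `g + φₚ · (y₁⁽ᵖ⁾ - g⁽ᵖ⁾(x₁)) + φ_q · (y₁⁽ᑫ⁾ - g⁽ᑫ⁾(x₁))` with
`φₚ = hₚ` and `φ_q = h_q - h_q⁽ᵖ⁾(x₁) · hₚ`, where `hₙ(x) = xⁿ / n!`. Since `hₙ⁽ᵏ⁾ = hₙ₋ₖ` for
`k ≤ n` and `hₙ⁽ᵏ⁾ = 0` for `n < k`, these switching functions satisfy
`φᵢ⁽ʲ⁾(x₁) = δᵢⱼ` for `i, j ∈ {p, q}`, and the constraints follow by linearity.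
-/

open Nat

section ConstrainedExpression

variable {𝕜 : Type*} [NontriviallyNormedField 𝕜]

noncomputable def constrainedExpression (g φp φq : 𝕜 → 𝕜) (p q : ℕ) (x₁ yp yq x : 𝕜) : 𝕜 :=
  g x + φp x * (yp - iteratedDeriv p g x₁) + φq x * (yq - iteratedDeriv q g x₁)

theorem iteratedDeriv_constrainedExpression {g φp φq : 𝕜 → 𝕜} {p q k : ℕ} {x₁ : 𝕜}
    (hg : ContDiffAt 𝕜 k g x₁) (hφp : ContDiffAt 𝕜 k φp x₁) (hφq : ContDiffAt 𝕜 k φq x₁)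
    (yp yq : 𝕜) :
    iteratedDeriv k (constrainedExpression g φp φq p q x₁ yp yq) x₁ =
      iteratedDeriv k g x₁ + iteratedDeriv k φp x₁ * (yp - iteratedDeriv p g x₁)
        + iteratedDeriv k φq x₁ * (yq - iteratedDeriv q g x₁) := by
  unfold constrainedExpression
  rw [iteratedDeriv_fun_add (hg.add (hφp.mul contDiffAt_const)) (hφq.mul contDiffAt_const),
    iteratedDeriv_fun_add hg (hφp.mul contDiffAt_const), iteratedDeriv_mul_const_field,
    iteratedDeriv_mul_const_field]

end ConstrainedExpression

section MonomialBasis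

variable {𝕜 : Type*} [NontriviallyNormedField 𝕜]

def powDivFactorial (n : ℕ) (x : 𝕜) : 𝕜 := x ^ n / n !

def powSwitchingFunction (p q : ℕ) (x₁ x : 𝕜) : 𝕜 :=
  powDivFactorial q x - powDivFactorial (q - p) x₁ * powDivFactorial p x

theorem constrainedExpression_powDivFactorial_eq {p q : ℕ} (hpq : p ≤ q) (g : 𝕜 → 𝕜)
    (x₁ yp yq : 𝕜) :
    constrainedExpression g (powDivFactorial p) (powSwitchingFunction p q x₁) p q x₁ yp yq =
      fun x => g x
        + x ^ p / (p.factorial : 𝕜) * (yp - iteratedDeriv p g x₁)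
        + (x ^ (q - p) / (q.factorial : 𝕜)
            - x₁ ^ (q - p) / ((p.factorial : 𝕜) * ((q - p).factorial : 𝕜))) * x ^ p
            * (yq - iteratedDeriv q g x₁) := by
  funext x
  simp only [constrainedExpression, powSwitchingFunction, powDivFactorial,
    ← pow_sub_mul_pow x hpq]
  ring

theorem contDiff_powDivFactorial (n : ℕ) {m : WithTop ℕ∞} :
    ContDiff 𝕜 m (powDivFactorial n : 𝕜 → 𝕜) := by
  unfold powDivFactorial
  fun_prop

theorem contDiff_powSwitchingFunction (p q : ℕ) (x₁ : 𝕜) {m : WithTop ℕ∞} :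
    ContDiff 𝕜 m (powSwitchingFunction p q x₁) :=
  (contDiff_powDivFactorial q).sub (contDiff_const.mul (contDiff_powDivFactorial p))

theorem iteratedDeriv_powSwitchingFunction (p q k : ℕ) (x₁ x : 𝕜) :
    iteratedDeriv k (powSwitchingFunction p q x₁) x = iteratedDeriv k (powDivFactorial q) x
      - powDivFactorial (q - p) x₁ * iteratedDeriv k (powDivFactorial p) x := by
  unfold powSwitchingFunction
  rw [iteratedDeriv_fun_sub (contDiff_powDivFactorial q).contDiffAt
      (contDiffAt_const.mul (contDiff_powDivFactorial p).contDiffAt),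
    iteratedDeriv_const_mul_field]

theorem iteratedDeriv_powDivFactorial_of_lt {k n : ℕ} (hnk : n < k) (x : 𝕜) :
    iteratedDeriv k (powDivFactorial n) x = 0 := by
  unfold powDivFactorial
  rw [iteratedDeriv_div_const, iteratedDeriv_pow, descFactorial_eq_zero_iff_lt.mpr hnk,
    cast_zero, zero_mul, zero_div]

variable [CharZero 𝕜]

theorem iteratedDeriv_powDivFactorial_of_le {k n : ℕ} (hkn : k ≤ n) (x : 𝕜) :
    iteratedDeriv k (powDivFactorial n) x = powDivFactorial (n - k) x := by
  have hfac : ((n - k)! : 𝕜) * n.descFactorial k = n ! := by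
    exact_mod_cast factorial_mul_descFactorial hkn
  have hdesc : (n.descFactorial k : 𝕜) ≠ 0 := by
    exact_mod_cast (descFactorial_pos.mpr hkn).ne'
  unfold powDivFactorial
  rw [iteratedDeriv_div_const, iteratedDeriv_pow, ← hfac, mul_comm ((n - k)! : 𝕜),
    mul_div_mul_left _ _ hdesc]

theorem iteratedDeriv_powDivFactorial_self (n : ℕ) (x : 𝕜) :
    iteratedDeriv n (powDivFactorial n) x = 1 := by
  simp [iteratedDeriv_powDivFactorial_of_le le_rfl, powDivFactorial]

theorem iteratedDeriv_powSwitchingFunction_of_le {p q : ℕ} (hpq : p ≤ q) (x₁ : 𝕜) :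
    iteratedDeriv p (powSwitchingFunction p q x₁) x₁ = 0 := by
  rw [iteratedDeriv_powSwitchingFunction, iteratedDeriv_powDivFactorial_of_le hpq,
    iteratedDeriv_powDivFactorial_self, mul_one, sub_self]

theorem iteratedDeriv_powSwitchingFunction_of_lt {p q : ℕ} (hpq : p < q) (x₁ : 𝕜) :
    iteratedDeriv q (powSwitchingFunction p q x₁) x₁ = 1 := by
  rw [iteratedDeriv_powSwitchingFunction, iteratedDeriv_powDivFactorial_self,
    iteratedDeriv_powDivFactorial_of_lt hpq, mul_zero, sub_zero]

end MonomialBasis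

theorem two_derivative_monomial_constrained_expression
    (p q : ℕ) (hpq : p < q) (x₁ yp yq : ℝ) (g : ℝ → ℝ) (hg : ContDiff ℝ q g) :
    (iteratedDeriv p
      (fun x => g x
        + x ^ p / (p.factorial : ℝ) * (yp - iteratedDeriv p g x₁)
        + (x ^ (q - p) / (q.factorial : ℝ)
            - x₁ ^ (q - p) / ((p.factorial : ℝ) * ((q - p).factorial : ℝ))) * x ^ p
            * (yq - iteratedDeriv q g x₁)) x₁ = yp)
    ∧ (iteratedDeriv q
      (fun x => g x
        + x ^ p / (p.factorial : ℝ) * (yp - iteratedDeriv p g x₁)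
        + (x ^ (q - p) / (q.factorial : ℝ)
            - x₁ ^ (q - p) / ((p.factorial : ℝ) * ((q - p).factorial : ℝ))) * x ^ p
            * (yq - iteratedDeriv q g x₁)) x₁ = yq) := by
  have hpq' : (p : WithTop ℕ∞) ≤ q := by exact_mod_cast hpq.le
  rw [← constrainedExpression_powDivFactorial_eq hpq.le]
  constructor
  · rw [iteratedDeriv_constrainedExpression (hg.of_le hpq').contDiffAt
      (contDiff_powDivFactorial p).contDiffAt (contDiff_powSwitchingFunction p q x₁).contDiffAt,
      iteratedDeriv_powDivFactorial_self, iteratedDeriv_powSwitchingFunction_of_le hpq.le]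
    ring
  · rw [iteratedDeriv_constrainedExpression hg.contDiffAt (contDiff_powDivFactorial p).contDiffAt
      (contDiff_powSwitchingFunction p q x₁).contDiffAt, iteratedDeriv_powDivFactorial_of_lt hpq,
      iteratedDeriv_powSwitchingFunction_of_lt hpq]
    ring
end

section
/- Let n be a natural number, x₁ a real number, y₁⁽⁰⁾, …, y₁⁽ⁿ⁾ real numbers, and g : ℝ → ℝ an n-times continuously differentiable function. Define y(x) = g(x) + Σ_{k=0}^{n} ((x - x₁)ᵏ/k!)·(y₁⁽ᵏ⁾ - g⁽ᵏ⁾(x₁)). Then for every j with 0 ≤ j ≤ n, the j-th iterated derivative of y at x₁ equals y₁⁽ʲ⁾. -/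
open Finset

variable {𝕜 : Type*} [NontriviallyNormedField 𝕜] [CharZero 𝕜]

theorem iteratedDeriv_sub_pow_div_factorial_mul_self (a c : 𝕜) (j k : ℕ) :
    iteratedDeriv j (fun x => (x - a) ^ k / (k.factorial : 𝕜) * c) a =
      if j = k then c else 0 := by
  rw [iteratedDeriv_mul_const_field, iteratedDeriv_div_const,
    iteratedDeriv_comp_sub_const j (· ^ k) a]
  simp only [sub_self, iteratedDeriv_fun_pow_zero]
  split_ifs with rfl
  · field_simp [Nat.factorial_ne_zero]
  · simp

theorem iteratedDeriv_sum_sub_pow_div_factorial_mul_self (a : 𝕜) (c : ℕ → 𝕜) {n j : ℕ}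
    (hj : j ≤ n) :
    iteratedDeriv j
      (fun x => ∑ k ∈ range (n + 1), (x - a) ^ k / (k.factorial : 𝕜) * c k) a = c j := by
  rw [iteratedDeriv_fun_sum fun k _ => by fun_prop]
  simp only [iteratedDeriv_sub_pow_div_factorial_mul_self, sum_ite_eq, mem_range]
  exact if_pos (Nat.lt_succ_of_le hj)

theorem taylor_constrained_expression
    (n : ℕ) (x₁ : ℝ) (Y : ℕ → ℝ) (g : ℝ → ℝ) (hg : ContDiff ℝ n g) :
    ∀ j ≤ n,
      iteratedDeriv j
        (fun x => g x + ∑ k ∈ Finset.range (n + 1),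
            (x - x₁) ^ k / (k.factorial : ℝ) * (Y k - iteratedDeriv k g x₁)) x₁ = Y j := by
  intro j hj
  have hgj : ContDiffAt ℝ j g x₁ := (hg.of_le (by exact_mod_cast hj)).contDiffAt
  rw [iteratedDeriv_fun_add hgj (by fun_prop),
    iteratedDeriv_sum_sub_pow_div_factorial_mul_self x₁ _ hj]
  ring
end

section
/- Let n ≥ 1, let x₁, …, xₙ be real numbers, d₁, …, dₙ natural numbers, and c₁, …, cₙ real numbers. Let β₁, …, βₙ : ℝ → ℝ be smooth functions satisfying the Kronecker property: for all k, j, the d_k-th iterated derivative of β_j at x_k equals 1 if k = j and 0 otherwise. Let g : ℝ → ℝ be smooth and define y(x) = g(x) + Σ_{k=1}^{n} β_k(x)·(c_k - g^{(d_k)}(x_k)). Then for every j = 1, …, n, the d_j-th iterated derivative of y at x_j equals c_j. -/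
private lemma myIteratedDeriv_add {m : ℕ} {f g : ℝ → ℝ} (hf : ContDiff ℝ m f)
    (hg : ContDiff ℝ m g) (x : ℝ) :
    iteratedDeriv m (fun z => f z + g z) x = iteratedDeriv m f x + iteratedDeriv m g x := by
  simp only [iteratedDeriv_eq_iteratedFDeriv]
  rw [show (fun z => f z + g z) = f + g from rfl, iteratedFDeriv_add_apply hf.contDiffAt hg.contDiffAt]
  rfl

private lemma myIteratedDeriv_sum {ι : Type*} {m : ℕ} {f : ι → ℝ → ℝ} (u : Finset ι)
    (hf : ∀ i ∈ u, ContDiff ℝ m (f i)) (x : ℝ) :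
    iteratedDeriv m (fun z => ∑ i ∈ u, f i z) x = ∑ i ∈ u, iteratedDeriv m (f i) x := by
  simp only [iteratedDeriv_eq_iteratedFDeriv]
  rw [iteratedFDeriv_sum hf]
  simp

private lemma myIteratedDeriv_mul_const {m : ℕ} {f : ℝ → ℝ} (hf : ContDiff ℝ m f)
    (a x : ℝ) :
    iteratedDeriv m (fun z => f z * a) x = iteratedDeriv m f x * a := by
  simp only [iteratedDeriv_eq_iteratedFDeriv]
  rw [show (fun z => f z * a) = a • f by ext z; simp [mul_comm],
    iteratedFDeriv_const_smul_apply hf.contDiffAt]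
  simp [mul_comm]

theorem general_constrained_expression
    (n : ℕ) (hn : 1 ≤ n) (xv : Fin n → ℝ) (d : Fin n → ℕ) (c : Fin n → ℝ)
    (β : Fin n → ℝ → ℝ) (hβsmooth : ∀ j, ContDiff ℝ (⊤ : ℕ∞) (β j))
    (hβ : ∀ k j : Fin n, iteratedDeriv (d k) (β j) (xv k) = if k = j then 1 else 0)
    (g : ℝ → ℝ) (hg : ContDiff ℝ (⊤ : ℕ∞) g)
    (y : ℝ → ℝ)
    (hy : y = fun x => g x + ∑ k : Fin n, β k x * (c k - iteratedDeriv (d k) g (xv k))) :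
    ∀ j : Fin n, iteratedDeriv (d j) y (xv j) = c j := by
  intro j
  subst hy
  rw [myIteratedDeriv_add (hg.of_le (by exact_mod_cast le_top))
    (by exact ContDiff.sum fun k _ => ((hβsmooth k).of_le (by exact_mod_cast le_top)).mul contDiff_const),
    myIteratedDeriv_sum _ (fun k _ => ((hβsmooth k).of_le (by exact_mod_cast le_top)).mul contDiff_const)]
  have : ∀ k : Fin n,
      iteratedDeriv (d j) (fun z => β k z * (c k - iteratedDeriv (d k) g (xv k))) (xv j)
        = (if j = k then 1 else 0) * (c k - iteratedDeriv (d k) g (xv k)) := by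
    intro k
    rw [myIteratedDeriv_mul_const ((hβsmooth k).of_le (by exact_mod_cast le_top)), hβ j k]
  simp only [this]
  simp [ite_mul, Finset.sum_ite_eq]
end

section
/- Let x₁ ≠ x₂ be real numbers and g : ℝ → ℝ a differentiable function. Define y(x) = g(x) + (x/(x₁ - x₂))·(g(x₂) - g(x₁)) + ((x² - x(x₁ + x₂))/(2(x₁ - x₂)))·(g'(x₂) - g'(x₁)). Then y satisfies the relative constraints y(x₁) = y(x₂) and y'(x₁) = y'(x₂). -/
/-!
Write `y = g + c x + d x (x - (x₁ + x₂))`. The parabola `x (x - (x₁ + x₂))` is symmetric about the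
midpoint of `x₁` and `x₂`, so it takes the same value at both points, while its slope differs by
`2 (x₁ - x₂)` between them. Hence the linear term alone corrects the gap `g x₁ - g x₂` and the
quadratic term alone corrects the gap `g' x₁ - g' x₂`; the coefficients of the constrained
expression are exactly the ones that cancel these gaps.
-/

def relativeCorrection (a b c d : ℝ) (g : ℝ → ℝ) (x : ℝ) : ℝ :=
  g x + x * c + x * (x - (a + b)) * d

section relativeCorrection

variable {a b c d : ℝ} {g : ℝ → ℝ}

theorem relativeCorrection_sub :
    relativeCorrection a b c d g a - relativeCorrection a b c d g b = g a - g b + (a - b) * c := by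
  unfold relativeCorrection
  ring

theorem hasDerivAt_relativeCorrection {g' x : ℝ} (hg : HasDerivAt g g' x) :
    HasDerivAt (relativeCorrection a b c d g) (g' + c + (2 * x - (a + b)) * d) x := by
  have hlin : HasDerivAt (fun x : ℝ => x * c) c x := by
    simpa using (hasDerivAt_id' x).mul_const c
  have hquad : HasDerivAt (fun x : ℝ => x * (x - (a + b)) * d) ((2 * x - (a + b)) * d) x := by
    refine (((hasDerivAt_id' x).mul ((hasDerivAt_id' x).sub_const (a + b))).mul_const d).congr_deriv ?_
    ring
  exact (hg.add hlin).add hquad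

theorem deriv_relativeCorrection_sub (ha : DifferentiableAt ℝ g a) (hb : DifferentiableAt ℝ g b) :
    deriv (relativeCorrection a b c d g) a - deriv (relativeCorrection a b c d g) b =
      deriv g a - deriv g b + 2 * (a - b) * d := by
  rw [(hasDerivAt_relativeCorrection ha.hasDerivAt).deriv,
    (hasDerivAt_relativeCorrection hb.hasDerivAt).deriv]
  ring

end relativeCorrection

theorem relative_constraints_constrained_expression
    (x₁ x₂ : ℝ) (hx : x₁ ≠ x₂) (g : ℝ → ℝ) (hg : Differentiable ℝ g)
    (y : ℝ → ℝ)
    (hy : y = fun x => g x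
      + x / (x₁ - x₂) * (g x₂ - g x₁)
      + (x ^ 2 - x * (x₁ + x₂)) / (2 * (x₁ - x₂)) * (deriv g x₂ - deriv g x₁)) :
    y x₁ = y x₂ ∧ deriv y x₁ = deriv y x₂ := by
  have hx' : x₁ - x₂ ≠ 0 := sub_ne_zero.mpr hx
  have hy' : y = relativeCorrection x₁ x₂ ((g x₂ - g x₁) / (x₁ - x₂))
      ((deriv g x₂ - deriv g x₁) / (2 * (x₁ - x₂))) g := by
    subst hy
    funext x
    unfold relativeCorrection
    ring
  rw [hy']
  constructor
  · rw [← sub_eq_zero, relativeCorrection_sub]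
    field_simp
    ring
  · rw [← sub_eq_zero, deriv_relativeCorrection_sub (hg x₁) (hg x₂)]
    field_simp
    ring
end
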